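/- arXiv:1008.0521 — 3 statements merged into one kernel-verified Lean document; each statement's English description precedes it below -/
import Mathlib

section
/- Let k ≥ 0 and let f be the 'good sections' function on n = (2k+1)^2 variables. For any input w with f(w) = 0 and any single section, there is at most one bit within that section whose flip changes the value of f; consequently s(f,w) ≤ 2k+1 for all w with f(w)=0. -/
/-!
Flipping one bit of an input with `f(w) = 0` can only make good the section containing that bit,
since the other sections are unchanged and none of them was good. The good sections form a code
of minimum Hamming distance 3: a pair pattern `{2i, 2i+1}` differs from any other good pattern in
both of its own bits and in a bit set in the other one. Two different single-bit flips inside one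
section are at distance 2, so at most one of them yields a good section; summing over the `2k+1`
sections bounds the sensitivity.
-/

def flipS {n : ℕ} (w : Fin n → Bool) (S : Finset (Fin n)) : Fin n → Bool :=
  fun i => if i ∈ S then !(w i) else w i

def sensAt {n : ℕ} (f : (Fin n → Bool) → Bool) (w : Fin n → Bool) : ℕ :=
  (Finset.univ.filter (fun i => f (flipS w {i}) ≠ f w)).card

def sens {n : ℕ} (f : (Fin n → Bool) → Bool) : ℕ :=
  Finset.univ.sup (fun w => sensAt f w)

noncomputable def bsAt {n : ℕ} (f : (Fin n → Bool) → Bool) (w : Fin n → Bool) : ℕ :=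
  sSup {k | ∃ B : Fin k → Finset (Fin n), (∀ j, (B j).Nonempty) ∧
    (∀ j₁ j₂, j₁ ≠ j₂ → Disjoint (B j₁) (B j₂)) ∧ (∀ j, f (flipS w (B j)) ≠ f w)}

noncomputable def bs {n : ℕ} (f : (Fin n → Bool) → Bool) : ℕ :=
  Finset.univ.sup (fun w => bsAt f w)
def secIdx (k : ℕ) (s p : Fin (2*k+1)) : Fin ((2*k+1)^2) :=
  ⟨s.val * (2*k+1) + p.val, by have := s.isLt; have := p.isLt; nlinarith⟩

def sectionOf (k : ℕ) (w : Fin ((2*k+1)^2) → Bool) (s : Fin (2*k+1)) : Fin (2*k+1) → Bool :=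
  fun p => w (secIdx k s p)

def goodSection (k : ℕ) (x : Fin (2*k+1) → Bool) : Prop :=
  (∃ i < k, ∀ j : Fin (2*k+1), x j = decide (j.val = 2*i ∨ j.val = 2*i+1)) ∨
  (∀ j : Fin (2*k+1), x j = decide (j.val = 2*k))

instance (k : ℕ) (x : Fin (2*k+1) → Bool) : Decidable (goodSection k x) := by
  unfold goodSection; infer_instance

def goodF (k : ℕ) : (Fin ((2*k+1)^2) → Bool) → Bool :=
  fun w => decide (∃ s : Fin (2*k+1), goodSection k (sectionOf k w s))

section Sections

variable {k : ℕ}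

lemma secIdx_injective2 : Function.Injective2 (secIdx k) := by
  intro s s' p p' h
  have hv : p.val + (2*k+1) * s.val = p'.val + (2*k+1) * s'.val := by
    have := congrArg Fin.val h
    simp only [secIdx] at this
    linarith
  have hp : p.val = p'.val := by
    simpa [Nat.add_mul_mod_self_left, Nat.mod_eq_of_lt p.isLt, Nat.mod_eq_of_lt p'.isLt] using
      congrArg (· % (2*k+1)) hv
  have hs : s.val = s'.val :=
    Nat.eq_of_mul_eq_mul_left (show 0 < 2*k+1 by omega)
      (show (2*k+1) * s.val = (2*k+1) * s'.val by omega)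
  exact ⟨Fin.ext hs, Fin.ext hp⟩

lemma exists_secIdx_eq (i : Fin ((2*k+1)^2)) : ∃ s p, secIdx k s p = i := by
  have hi : i.val < (2*k+1) * (2*k+1) := by simpa [sq] using i.isLt
  exact ⟨⟨i.val / (2*k+1), Nat.div_lt_of_lt_mul hi⟩, ⟨i.val % (2*k+1), Nat.mod_lt _ (by omega)⟩,
    Fin.ext (Nat.div_add_mod' i.val (2*k+1))⟩

lemma sectionOf_flipS_secIdx_self (w : Fin ((2*k+1)^2) → Bool) (s p : Fin (2*k+1)) :
    sectionOf k (flipS w {secIdx k s p}) s = flipS (sectionOf k w s) {p} := by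
  funext q
  have : secIdx k s q = secIdx k s p ↔ q = p :=
    ⟨fun h => (secIdx_injective2 h).2, by rintro rfl; rfl⟩
  simp [sectionOf, flipS, this]

lemma sectionOf_flipS_secIdx_of_ne (w : Fin ((2*k+1)^2) → Bool) {s s' : Fin (2*k+1)}
    (p : Fin (2*k+1)) (hs : s' ≠ s) :
    sectionOf k (flipS w {secIdx k s p}) s' = sectionOf k w s' := by
  funext q
  have : secIdx k s' q ≠ secIdx k s p := fun h => hs (secIdx_injective2 h).1
  simp [sectionOf, flipS, this]

lemma goodSection_of_goodF_flipS {w : Fin ((2*k+1)^2) → Bool} (hw : goodF k w = false)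
    {s p : Fin (2*k+1)} (h : goodF k (flipS w {secIdx k s p}) = true) :
    goodSection k (flipS (sectionOf k w s) {p}) := by
  obtain ⟨s', hs'⟩ := of_decide_eq_true h
  rcases eq_or_ne s' s with rfl | hne
  · rwa [sectionOf_flipS_secIdx_self] at hs'
  · rw [sectionOf_flipS_secIdx_of_ne w p hne] at hs'
    simp only [goodF, decide_eq_false_iff_not, not_exists] at hw
    exact absurd hs' (hw s')

end Sections

section Hamming

variable {ι β : Type*} [Fintype ι] [DecidableEq β]

lemma three_le_hammingDist {x y : ι → β} {a b c : ι} (hab : a ≠ b) (hac : a ≠ c) (hbc : b ≠ c)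
    (ha : x a ≠ y a) (hb : x b ≠ y b) (hc : x c ≠ y c) : 3 ≤ hammingDist x y :=
  Finset.two_lt_card.mpr ⟨a, by simpa, b, by simpa, c, by simpa, hab, hac, hbc⟩

lemma hammingDist_flipS_le_two {n : ℕ} (x : Fin n → Bool) (p q : Fin n) :
    hammingDist (flipS x {p}) (flipS x {q}) ≤ 2 := by
  calc hammingDist (flipS x {p}) (flipS x {q}) ≤ ({p, q} : Finset (Fin n)).card := by
        refine Finset.card_le_card fun j hj => ?_
        by_contra hpq
        simp only [Finset.mem_insert, Finset.mem_singleton, not_or] at hpq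
        simp [flipS, hpq.1, hpq.2] at hj
    _ ≤ 2 := Finset.card_le_two

end Hamming

section GoodSections

variable {k : ℕ}

lemma three_le_hammingDist_of_pair {i : ℕ} (hi : i < k) {y₁ y₂ : Fin (2*k+1) → Bool}
    (hy₁ : ∀ j : Fin (2*k+1), y₁ j = decide (j.val = 2*i ∨ j.val = 2*i+1))
    (h₂ : goodSection k y₂) (hne : y₁ ≠ y₂) : 3 ≤ hammingDist y₁ y₂ := by
  rcases h₂ with ⟨i', hi', hy₂⟩ | hy₂
  · have hii' : i ≠ i' := by
      rintro rfl
      exact hne (funext fun j => by rw [hy₁, hy₂])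
    refine three_le_hammingDist (a := ⟨2*i, by omega⟩) (b := ⟨2*i+1, by omega⟩)
      (c := ⟨2*i', by omega⟩) ?_ ?_ ?_ ?_ ?_ ?_ <;> simp [hy₁, hy₂] <;> omega
  · refine three_le_hammingDist (a := ⟨2*i, by omega⟩) (b := ⟨2*i+1, by omega⟩)
      (c := ⟨2*k, by omega⟩) ?_ ?_ ?_ ?_ ?_ ?_ <;> simp [hy₁, hy₂] <;> omega

lemma three_le_hammingDist_of_goodSection {y₁ y₂ : Fin (2*k+1) → Bool}
    (h₁ : goodSection k y₁) (h₂ : goodSection k y₂) (hne : y₁ ≠ y₂) :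
    3 ≤ hammingDist y₁ y₂ := by
  rcases h₁ with ⟨i, hi, hy₁⟩ | hy₁
  · exact three_le_hammingDist_of_pair hi hy₁ h₂ hne
  rcases h₂ with ⟨i, hi, hy₂⟩ | hy₂
  · rw [hammingDist_comm]
    exact three_le_hammingDist_of_pair hi hy₂ (Or.inr hy₁) hne.symm
  · exact absurd (funext fun j => by rw [hy₁, hy₂]) hne

lemma eq_of_goodSection_flipS {x : Fin (2*k+1) → Bool} {p q : Fin (2*k+1)}
    (hp : goodSection k (flipS x {p})) (hq : goodSection k (flipS x {q})) : p = q := by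
  by_contra hpq
  have hne : flipS x {p} ≠ flipS x {q} := fun h => by
    simpa [flipS, hpq] using congrFun h p
  have := three_le_hammingDist_of_goodSection hp hq hne
  have := hammingDist_flipS_le_two x p q
  omega

end GoodSections

lemma sensAt_le_of_forall_section {k m : ℕ} (f : (Fin ((2*k+1)^2) → Bool) → Bool)
    (w : Fin ((2*k+1)^2) → Bool)
    (h : ∀ s : Fin (2*k+1),
      (Finset.univ.filter (fun p => f (flipS w {secIdx k s p}) ≠ f w)).card ≤ m) :
    sensAt f w ≤ (2*k+1) * m := by
  have hcover : Finset.univ.filter (fun i => f (flipS w {i}) ≠ f w) ⊆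
      Finset.univ.biUnion fun s =>
        (Finset.univ.filter (fun p => f (flipS w {secIdx k s p}) ≠ f w)).image (secIdx k s) := by
    intro i hi
    obtain ⟨s, p, rfl⟩ := exists_secIdx_eq i
    simpa using ⟨s, p, by simpa using hi, rfl⟩
  calc sensAt f w ≤ _ := Finset.card_le_card hcover
    _ ≤ Finset.univ.card * m :=
        Finset.card_biUnion_le_card_mul _ _ _ fun s _ => Finset.card_image_le.trans (h s)
    _ = (2*k+1) * m := by rw [Finset.card_univ, Fintype.card_fin]

theorem stmt8 (k : ℕ) (w : Fin ((2*k+1)^2) → Bool) (hw : goodF k w = false) :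
    (∀ s : Fin (2*k+1),
      (Finset.univ.filter (fun p : Fin (2*k+1) =>
        goodF k (flipS w {secIdx k s p}) ≠ goodF k w)).card ≤ 1) ∧
    sensAt (goodF k) w ≤ 2*k+1 := by
  have hsection : ∀ s : Fin (2*k+1),
      (Finset.univ.filter (fun p : Fin (2*k+1) =>
        goodF k (flipS w {secIdx k s p}) ≠ goodF k w)).card ≤ 1 := by
    refine fun s => Finset.card_le_one.mpr fun p hp q hq => ?_
    simp only [Finset.mem_filter, Finset.mem_univ, true_and, hw, ne_eq,
      Bool.not_eq_false] at hp hq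
    exact eq_of_goodSection_flipS (goodSection_of_goodF_flipS hw hp)
      (goodSection_of_goodF_flipS hw hq)
  exact ⟨hsection, by simpa using sensAt_le_of_forall_section (goodF k) w hsection⟩
end

section
/- For every even perfect square n, Rubinstein's function f on n variables satisfies 2·bs(f) = s(f)^2 = n. -/
def rSecIdx (m : ℕ) (s p : Fin m) : Fin (m^2) :=
  ⟨s.val * m + p.val, by have := s.isLt; have := p.isLt; nlinarith⟩

def rGoodSection (m : ℕ) (x : Fin m → Bool) : Prop :=
  ∃ i < m, 2*i+1 < m ∧ ∀ j : Fin m, x j = decide (j.val = 2*i ∨ j.val = 2*i+1)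

instance (m : ℕ) (x : Fin m → Bool) : Decidable (rGoodSection m x) := by
  unfold rGoodSection; infer_instance

def rubinF (m : ℕ) : (Fin (m^2) → Bool) → Bool :=
  fun w => decide (∃ s : Fin m, rGoodSection m (fun p => w (rSecIdx m s p)))

/-!
A word is accepted iff one of its sections is a pattern `pat m i` (ones exactly at `2i, 2i+1`).
Distinct patterns are at Hamming distance 4, so at most one bit of a section can be flipped to
turn it into a pattern. Hence at a rejected word every section carries at most one sensitive bit,
while at an accepted word every sensitive bit, and every sensitive block, meets a fixed good
section; this gives `s(f) ≤ m`, attained at a word whose only nonzero section is a pattern. At a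
rejected word a sensitive block creates a pattern in some section, and the pair
(section, pattern) determines the block's part in that section, so disjoint blocks get distinct
pairs and `bs(f) ≤ m · m/2`; the `m · m/2` blocks `{2i, 2i+1}` at the all-zero word attain it.
-/

open Finset

section Flip

variable {n : ℕ}

lemma flipS_ne_iff {x : Fin n → Bool} {F : Finset (Fin n)} {i : Fin n} :
    flipS x F i ≠ x i ↔ i ∈ F := by
  by_cases h : i ∈ F <;> simp [flipS, h]

lemma flipS_injective (x : Fin n → Bool) : Function.Injective (flipS x) := fun F G h => by
  ext i
  rw [← flipS_ne_iff (x := x), ← flipS_ne_iff (x := x), h]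

@[simp]
lemma flipS_empty (x : Fin n → Bool) : flipS x ∅ = x := by
  funext i
  simp [flipS]

lemma hammingDist_flipS (x : Fin n → Bool) (F : Finset (Fin n)) :
    hammingDist x (flipS x F) = #F := by
  simp only [hammingDist, ne_comm (a := x _), flipS_ne_iff, filter_mem_eq_inter, univ_inter]

end Flip

section BlockSensitivity

variable {n : ℕ} {f : (Fin n → Bool) → Bool} {w : Fin n → Bool}

def IsSensitiveBlocks (f : (Fin n → Bool) → Bool) (w : Fin n → Bool) {ι : Type*}
    (B : ι → Finset (Fin n)) : Prop :=
  (∀ j, (B j).Nonempty) ∧ (∀ j₁ j₂, j₁ ≠ j₂ → Disjoint (B j₁) (B j₂)) ∧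
    ∀ j, f (flipS w (B j)) ≠ f w

namespace IsSensitiveBlocks

variable {ι : Type*} [Fintype ι] {B : ι → Finset (Fin n)}

lemma card_le_of_label (hB : IsSensitiveBlocks f w B) {T : Type*} [Fintype T] (c : ι → T)
    (hc : ∀ j₁ j₂, c j₁ = c j₂ → ¬ Disjoint (B j₁) (B j₂)) :
    Fintype.card ι ≤ Fintype.card T :=
  Fintype.card_le_of_injective c fun j₁ j₂ h =>
    by_contra fun hne => hc j₁ j₂ h (hB.2.1 j₁ j₂ hne)

lemma card_le (hB : IsSensitiveBlocks f w B) : Fintype.card ι ≤ n := by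
  simpa using hB.card_le_of_label (fun j => (hB.1 j).choose) fun j₁ j₂ h =>
    not_disjoint_iff.mpr ⟨_, (hB.1 j₁).choose_spec, h ▸ (hB.1 j₂).choose_spec⟩

lemma le_bsAt (hB : IsSensitiveBlocks f w B) : Fintype.card ι ≤ bsAt f w := by
  let e := (Fintype.equivFin ι).symm
  refine le_csSup ⟨n, fun k ⟨B', hB'⟩ => by simpa using IsSensitiveBlocks.card_le hB'⟩
    ⟨B ∘ e, fun j => hB.1 _, fun j₁ j₂ h => hB.2.1 _ _ (e.injective.ne h), fun j => hB.2.2 _⟩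

end IsSensitiveBlocks

lemma bsAt_le_of_forall {N : ℕ}
    (h : ∀ k (B : Fin k → Finset (Fin n)), IsSensitiveBlocks f w B → k ≤ N) :
    bsAt f w ≤ N :=
  csSup_le' fun k ⟨B, hB⟩ => h k B hB

end BlockSensitivity

section Rubinstein

variable {m : ℕ}

def sec (m : ℕ) (w : Fin (m ^ 2) → Bool) (s : Fin m) : Fin m → Bool :=
  fun p => w (rSecIdx m s p)

def secSlice (m : ℕ) (B : Finset (Fin (m ^ 2))) (s : Fin m) : Finset (Fin m) :=
  {p | rSecIdx m s p ∈ B}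

def pat (m i : ℕ) : Fin m → Bool :=
  fun j => decide (j.val = 2 * i ∨ j.val = 2 * i + 1)

def secEquiv (m : ℕ) : Fin m × Fin m ≃ Fin (m ^ 2) :=
  finProdFinEquiv.trans (finCongr (sq m).symm)

lemma secEquiv_apply (s p : Fin m) : secEquiv m (s, p) = rSecIdx m s p := by
  ext
  simp only [secEquiv, Equiv.trans_apply, finProdFinEquiv_apply_val, finCongr_apply,
    Fin.val_cast, rSecIdx]
  ring

lemma rSecIdx_inj {s s' p p' : Fin m} : rSecIdx m s p = rSecIdx m s' p' ↔ s = s' ∧ p = p' := by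
  rw [← secEquiv_apply, ← secEquiv_apply, (secEquiv m).injective.eq_iff, Prod.mk.injEq]

def fromSecs (x : Fin m → Fin m → Bool) : Fin (m ^ 2) → Bool :=
  fun i => x ((secEquiv m).symm i).1 ((secEquiv m).symm i).2

@[simp]
lemma sec_fromSecs (x : Fin m → Fin m → Bool) (s : Fin m) : sec m (fromSecs x) s = x s := by
  funext p
  simp [sec, fromSecs, ← secEquiv_apply]

lemma sec_flipS (w : Fin (m ^ 2) → Bool) (B : Finset (Fin (m ^ 2))) (s : Fin m) :
    sec m (flipS w B) s = flipS (sec m w s) (secSlice m B s) := by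
  funext p
  simp [sec, flipS, secSlice]

lemma secSlice_image (P : Finset (Fin m)) (s s' : Fin m) :
    secSlice m (P.image (rSecIdx m s)) s' = if s' = s then P else ∅ := by
  ext p
  split_ifs with h
  · subst h
    simp [secSlice, rSecIdx_inj]
  · simp [secSlice, rSecIdx_inj, Ne.symm h]

lemma rubinF_eq_true_iff (w : Fin (m ^ 2) → Bool) :
    rubinF m w = true ↔ ∃ s, rGoodSection m (sec m w s) :=
  decide_eq_true_iff

lemma rGoodSection_iff (x : Fin m → Bool) :
    rGoodSection m x ↔ ∃ i : Fin (m / 2), x = pat m i := by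
  constructor
  · rintro ⟨i, -, hi, hx⟩
    exact ⟨⟨i, by omega⟩, funext hx⟩
  · rintro ⟨i, rfl⟩
    exact ⟨i, by omega, by omega, fun _ => rfl⟩

lemma rGoodSection_pat (i : Fin (m / 2)) : rGoodSection m (pat m i) :=
  (rGoodSection_iff _).mpr ⟨i, rfl⟩

lemma not_rGoodSection_false : ¬ rGoodSection m fun _ => false := by
  rintro ⟨i, -, hi, hx⟩
  simpa using hx ⟨2 * i, by omega⟩

lemma eq_of_hammingDist_pat_le_two {i j : Fin (m / 2)}
    (h : hammingDist (pat m i) (pat m j) ≤ 2) : i = j := by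
  by_contra hij
  have hij' : i.val ≠ j.val := Fin.val_ne_of_ne hij
  have hsub : ({⟨2 * i, by omega⟩, ⟨2 * i + 1, by omega⟩, ⟨2 * j, by omega⟩} : Finset (Fin m)) ⊆
      ({p | pat m i p ≠ pat m j p} : Finset (Fin m)) := by
    intro p hp
    simp only [mem_insert, mem_singleton, Fin.ext_iff] at hp
    simp only [mem_filter, mem_univ, true_and, pat, ne_eq, decide_eq_decide]
    omega
  have hcard := card_le_card hsub
  rw [card_eq_three.mpr ⟨_, _, _, by simp [Fin.ext_iff], by simp [Fin.ext_iff]; omega,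
    by simp [Fin.ext_iff]; omega, rfl⟩] at hcard
  exact absurd (hcard.trans h) (by norm_num)

lemma rGoodSection.flipS_eq {x : Fin m → Bool} {F₁ F₂ : Finset (Fin m)}
    (h₁ : rGoodSection m (flipS x F₁)) (h₂ : rGoodSection m (flipS x F₂)) (hF : #F₁ + #F₂ ≤ 2) :
    F₁ = F₂ := by
  obtain ⟨i₁, hi₁⟩ := (rGoodSection_iff _).mp h₁
  obtain ⟨i₂, hi₂⟩ := (rGoodSection_iff _).mp h₂
  have hdist : hammingDist (pat m i₁) (pat m i₂) ≤ 2 := by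
    calc hammingDist (pat m i₁) (pat m i₂)
        ≤ hammingDist (pat m i₁) x + hammingDist x (pat m i₂) := hammingDist_triangle _ _ _
      _ = #F₁ + #F₂ := by rw [← hi₁, ← hi₂, hammingDist_comm, hammingDist_flipS, hammingDist_flipS]
      _ ≤ 2 := hF
  exact flipS_injective x (by rw [hi₁, hi₂, eq_of_hammingDist_pat_le_two hdist])

lemma rGoodSection.not_flipS_singleton {x : Fin m → Bool} (h : rGoodSection m x) (p : Fin m) :
    ¬ rGoodSection m (flipS x {p}) := fun hp =>
  singleton_ne_empty p (rGoodSection.flipS_eq hp (by rwa [flipS_empty]) (by simp))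

lemma secSlice_nonempty_of_rubinF_ne {w : Fin (m ^ 2) → Bool} {B : Finset (Fin (m ^ 2))}
    {s : Fin m} (hs : rGoodSection m (sec m w s)) (hB : rubinF m (flipS w B) ≠ rubinF m w) :
    (secSlice m B s).Nonempty := by
  refine nonempty_iff_ne_empty.mpr fun h => hB ?_
  have hw := (rubinF_eq_true_iff w).mpr ⟨s, hs⟩
  rw [hw, rubinF_eq_true_iff]
  exact ⟨s, by rwa [sec_flipS, h, flipS_empty]⟩

lemma exists_rGoodSection_of_rubinF_ne {w : Fin (m ^ 2) → Bool} {B : Finset (Fin (m ^ 2))}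
    (hw : rubinF m w = false) (hB : rubinF m (flipS w B) ≠ rubinF m w) :
    ∃ s, (secSlice m B s).Nonempty ∧ rGoodSection m (flipS (sec m w s) (secSlice m B s)) := by
  rw [hw, ne_eq, Bool.not_eq_false, rubinF_eq_true_iff] at hB
  obtain ⟨s, hs⟩ := hB
  rw [sec_flipS] at hs
  refine ⟨s, nonempty_iff_ne_empty.mpr fun h => ?_, hs⟩
  rw [h, flipS_empty] at hs
  exact Bool.false_ne_true (hw ▸ (rubinF_eq_true_iff w).mpr ⟨s, hs⟩)

lemma secSlice_singleton (s p s' : Fin m) :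
    secSlice m {rSecIdx m s p} s' = if s' = s then {p} else ∅ := by
  rw [← image_singleton, secSlice_image]

lemma sensAt_rubinF_eq_card (w : Fin (m ^ 2) → Bool) :
    sensAt (rubinF m) w =
      #{q : Fin m × Fin m | rubinF m (flipS w {rSecIdx m q.1 q.2}) ≠ rubinF m w} :=
  card_equiv (secEquiv m).symm fun i => by simp [← secEquiv_apply]

lemma sensAt_rubinF_le (w : Fin (m ^ 2) → Bool) : sensAt (rubinF m) w ≤ m := by
  rw [sensAt_rubinF_eq_card]
  refine le_of_le_of_eq ?_ (card_fin m)
  obtain hw | hw := Bool.eq_false_or_eq_true (rubinF m w)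
  · obtain ⟨s₀, hs₀⟩ := (rubinF_eq_true_iff w).mp hw
    have hsec : ∀ q : Fin m × Fin m, rubinF m (flipS w {rSecIdx m q.1 q.2}) ≠ rubinF m w →
        q.1 = s₀ := by
      intro q hq
      have hne := secSlice_nonempty_of_rubinF_ne hs₀ hq
      by_contra h
      simp [secSlice_singleton, Ne.symm h] at hne
    refine card_le_card_of_injOn Prod.snd (by simp) fun q₁ h₁ q₂ h₂ h => Prod.ext ?_ h
    rw [hsec q₁ (mem_filter.mp h₁).2, hsec q₂ (mem_filter.mp h₂).2]
  · have hgood : ∀ q : Fin m × Fin m, rubinF m (flipS w {rSecIdx m q.1 q.2}) ≠ rubinF m w →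
        rGoodSection m (flipS (sec m w q.1) {q.2}) := by
      intro q hq
      obtain ⟨s, hne, hs⟩ := exists_rGoodSection_of_rubinF_ne hw hq
      by_cases h : s = q.1
      · simpa [secSlice_singleton, h] using hs
      · simp [secSlice_singleton, h] at hne
    refine card_le_card_of_injOn Prod.fst (by simp) fun q₁ h₁ q₂ h₂ h => Prod.ext h ?_
    have hq₂ := hgood q₂ (mem_filter.mp h₂).2
    rw [← h] at hq₂
    simpa using (hgood q₁ (mem_filter.mp h₁).2).flipS_eq hq₂ (by simp)

namespace IsSensitiveBlocks

variable {ι : Type*} [Fintype ι] {w : Fin (m ^ 2) → Bool} {B : ι → Finset (Fin (m ^ 2))}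

lemma card_le_of_rubinF_true (hB : IsSensitiveBlocks (rubinF m) w B) (hw : rubinF m w = true) :
    Fintype.card ι ≤ m := by
  obtain ⟨s₀, hs₀⟩ := (rubinF_eq_true_iff w).mp hw
  choose p hp using fun j => secSlice_nonempty_of_rubinF_ne hs₀ (hB.2.2 j)
  simpa using hB.card_le_of_label p fun j₁ j₂ h => not_disjoint_iff.mpr
    ⟨rSecIdx m s₀ (p j₁), (mem_filter.mp (hp j₁)).2, h ▸ (mem_filter.mp (hp j₂)).2⟩

lemma card_le_of_rubinF_false (hB : IsSensitiveBlocks (rubinF m) w B) (hw : rubinF m w = false) :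
    Fintype.card ι ≤ m * (m / 2) := by
  choose s hne hgood using fun j => exists_rGoodSection_of_rubinF_ne hw (hB.2.2 j)
  choose i hi using fun j => (rGoodSection_iff _).mp (hgood j)
  simpa using hB.card_le_of_label (fun j => (s j, i j)) fun j₁ j₂ h => by
    obtain ⟨hs, hij⟩ := Prod.mk.inj h
    -- the pattern created in a section determines the block's part there
    have hslice : secSlice m (B j₁) (s j₁) = secSlice m (B j₂) (s j₂) := by
      apply flipS_injective (sec m w (s j₁))
      rw [hi j₁, hij, hs, hi j₂]
    obtain ⟨p, hp⟩ := hne j₁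
    have hp₂ := hslice ▸ hp
    rw [← hs] at hp₂
    exact not_disjoint_iff.mpr ⟨rSecIdx m (s j₁) p, (mem_filter.mp hp).2, (mem_filter.mp hp₂).2⟩

end IsSensitiveBlocks

lemma bsAt_rubinF_le (w : Fin (m ^ 2) → Bool) : bsAt (rubinF m) w ≤ m * (m / 2) :=
  bsAt_le_of_forall fun k B hB => by
    obtain hw | hw := Bool.eq_false_or_eq_true (rubinF m w)
    · obtain ⟨s₀, hs₀⟩ := (rubinF_eq_true_iff w).mp hw
      obtain ⟨i, -⟩ := (rGoodSection_iff _).mp hs₀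
      simpa using (hB.card_le_of_rubinF_true hw).trans (Nat.le_mul_of_pos_right m i.pos)
    · simpa using hB.card_le_of_rubinF_false hw

lemma le_sens_rubinF (hm : Even m) : m ≤ sens (rubinF m) := by
  rcases Nat.eq_zero_or_pos m with rfl | hpos
  · exact Nat.zero_le _
  let s₀ : Fin m := ⟨0, hpos⟩
  let i₀ : Fin (m / 2) := ⟨0, by obtain ⟨r, rfl⟩ := hm; omega⟩
  let w := fromSecs (Function.update (fun _ _ => false) s₀ (pat m i₀))
  have hsec (s : Fin m) : sec m w s = if s = s₀ then pat m i₀ else fun _ => false := by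
    simp [w, Function.update_apply]
  have hw : rubinF m w = true :=
    (rubinF_eq_true_iff w).mpr ⟨s₀, by simpa [hsec] using rGoodSection_pat i₀⟩
  have hflip (p : Fin m) : rubinF m (flipS w {rSecIdx m s₀ p}) = false := by
    rw [← Bool.not_eq_true, rubinF_eq_true_iff]
    rintro ⟨s, hs⟩
    rw [sec_flipS, secSlice_singleton, hsec] at hs
    by_cases h : s = s₀
    · simp only [h, if_true] at hs
      exact (rGoodSection_pat i₀).not_flipS_singleton p hs
    · simp only [h, if_false, flipS_empty] at hs
      exact not_rGoodSection_false hs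
  calc m = #(univ : Finset (Fin m)) := (card_fin m).symm
    _ ≤ sensAt (rubinF m) w := by
      rw [sensAt_rubinF_eq_card]
      exact card_le_card_of_injOn (fun p => (s₀, p)) (fun p _ => by simp [hflip, hw])
        fun _ _ _ _ h => (Prod.mk.inj h).2
    _ ≤ sens (rubinF m) := le_sup (mem_univ w)

def pairBlock (m : ℕ) (s : Fin m) (i : ℕ) : Finset (Fin (m ^ 2)) :=
  ({p | pat m i p} : Finset (Fin m)).image (rSecIdx m s)

lemma isSensitiveBlocks_pairBlock :
    IsSensitiveBlocks (rubinF m) (fun _ => false)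
      fun q : Fin m × Fin (m / 2) => pairBlock m q.1 q.2 := by
  have hfalse : rubinF m (fun _ => false) = false := by
    rw [← Bool.not_eq_true, rubinF_eq_true_iff]
    exact fun ⟨_, hs⟩ => not_rGoodSection_false hs
  refine ⟨fun q => ⟨_, mem_image_of_mem _ (a := ⟨2 * q.2, by omega⟩) (by simp [pat])⟩,
    fun q₁ q₂ hne => disjoint_left.mpr ?_, fun q => ?_⟩
  · rintro _ h₁ h₂
    simp only [pairBlock, mem_image, mem_filter, mem_univ, true_and] at h₁ h₂
    obtain ⟨p₁, hp₁, rfl⟩ := h₁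
    obtain ⟨p₂, hp₂, h⟩ := h₂
    obtain ⟨hs, rfl⟩ := rSecIdx_inj.mp h
    refine hne (Prod.ext hs.symm (Fin.ext ?_))
    simp only [pat, decide_eq_true_eq] at hp₁ hp₂
    omega
  · rw [hfalse, ne_eq, Bool.not_eq_false, rubinF_eq_true_iff]
    refine ⟨q.1, ?_⟩
    simp only [sec_flipS, pairBlock, secSlice_image, if_true]
    convert rGoodSection_pat q.2
    funext p
    simp [flipS, sec]

lemma le_bs_rubinF (m : ℕ) : m * (m / 2) ≤ bs (rubinF m) := by
  calc m * (m / 2) = Fintype.card (Fin m × Fin (m / 2)) := by simp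
    _ ≤ bsAt (rubinF m) fun _ => false := isSensitiveBlocks_pairBlock.le_bsAt
    _ ≤ bs (rubinF m) := le_sup (mem_univ _)

end Rubinstein

theorem stmt10 (m : ℕ) (heven : Even (m^2)) :
    2 * bs (rubinF m) = (sens (rubinF m))^2 ∧ (sens (rubinF m))^2 = m^2 := by
  have hm : Even m := (Nat.even_pow' two_ne_zero).mp heven
  have hsens : sens (rubinF m) = m :=
    le_antisymm (Finset.sup_le fun w _ => sensAt_rubinF_le w) (le_sens_rubinF hm)
  have hbs : bs (rubinF m) = m * (m / 2) :=
    le_antisymm (Finset.sup_le fun w _ => bsAt_rubinF_le w) (le_bs_rubinF m)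
  refine ⟨?_, by rw [hsens]⟩
  calc 2 * bs (rubinF m) = m * (m / 2 * 2) := by rw [hbs]; ring
    _ = sens (rubinF m) ^ 2 := by rw [Nat.div_two_mul_two_of_even hm, hsens, sq]
end

section
/- Let k ≥ 0 and let f be the 'good sections' function on n = (2k+1)^2 variables. On the all-zeros input, the (2k+1)(k+1) blocks consisting of, for each of the 2k+1 sections, the k pairs {x_{2i-1}, x_{2i}} (1 ≤ i ≤ k) and the singleton {x_{2k+1}}, are pairwise disjoint and each flips the value of f. Hence bs(f, 0…0) ≥ (2k+1)(k+1). -/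
def zeroBlock (k : ℕ) (s : Fin (2*k+1)) (i : Fin (k+1)) : Finset (Fin ((2*k+1)^2)) :=
  if h : i.val < k then
    {secIdx k s ⟨2*i.val, by omega⟩, secIdx k s ⟨2*i.val+1, by omega⟩}
  else
    {secIdx k s ⟨2*k, by omega⟩}

theorem flipS_false_apply {n : ℕ} (S : Finset (Fin n)) (i : Fin n) :
    flipS (fun _ => false) S i = decide (i ∈ S) := by
  by_cases h : i ∈ S <;> simp [flipS, h]

theorem card_le_bsAt {ι : Type*} [Fintype ι] {n : ℕ} (f : (Fin n → Bool) → Bool)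
    (w : Fin n → Bool) (B : ι → Finset (Fin n)) (hne : ∀ j, (B j).Nonempty)
    (hdisj : Pairwise fun j₁ j₂ => Disjoint (B j₁) (B j₂))
    (hflip : ∀ j, f (flipS w (B j)) ≠ f w) :
    Fintype.card ι ≤ bsAt f w := by
  have hbdd : BddAbove {m | ∃ B : Fin m → Finset (Fin n), (∀ j, (B j).Nonempty) ∧
      (∀ j₁ j₂, j₁ ≠ j₂ → Disjoint (B j₁) (B j₂)) ∧ (∀ j, f (flipS w (B j)) ≠ f w)} := by
    refine ⟨n, ?_⟩
    rintro m ⟨B, hne, hdisj, -⟩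
    choose g hg using hne
    have hinj : Function.Injective g := fun j₁ j₂ h => by
      by_contra hne
      exact Finset.disjoint_left.mp (hdisj j₁ j₂ hne) (hg j₁) (h ▸ hg j₂)
    simpa using Fintype.card_le_of_injective g hinj
  let e := Fintype.equivFin ι
  exact le_csSup hbdd ⟨B ∘ e.symm, fun j => hne _,
    fun j₁ j₂ h => hdisj (e.symm.injective.ne h), fun j => hflip _⟩

section GoodSections

variable {k : ℕ}

theorem secIdx_inj {s s' p p' : Fin (2*k+1)} :
    secIdx k s p = secIdx k s' p' ↔ s = s' ∧ p = p' := by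
  refine ⟨fun h => ?_, fun ⟨hs, hp⟩ => hs ▸ hp ▸ rfl⟩
  have hv : p.val + s.val * (2*k+1) = p'.val + s'.val * (2*k+1) := by
    simpa [secIdx, add_comm] using congrArg Fin.val h
  have hs : s.val = s'.val := by
    simpa [Nat.add_mul_div_right _ _ (Nat.succ_pos (2*k)), Nat.div_eq_of_lt p.isLt,
      Nat.div_eq_of_lt p'.isLt] using congrArg (· / (2*k+1)) hv
  rw [hs] at hv
  exact ⟨Fin.ext hs, Fin.ext (by omega)⟩

theorem secIdx_surjective (a : Fin ((2*k+1)^2)) : ∃ s p, a = secIdx k s p := by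
  refine ⟨⟨a / (2*k+1), Nat.div_lt_of_lt_mul (by simpa [sq] using a.isLt)⟩,
    ⟨a % (2*k+1), Nat.mod_lt _ (by omega)⟩, Fin.ext ?_⟩
  simp [secIdx, Nat.div_add_mod']

theorem secIdx_mem_zeroBlock {s s' p : Fin (2*k+1)} {i : Fin (k+1)} :
    secIdx k s' p ∈ zeroBlock k s i ↔ s' = s ∧ p.val / 2 = i.val := by
  have hp := p.isLt
  have hi := i.isLt
  unfold zeroBlock
  split_ifs with h
  · simp only [Finset.mem_insert, Finset.mem_singleton, secIdx_inj]
    simp only [Fin.ext_iff]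
    omega
  · simp only [Finset.mem_singleton, secIdx_inj]
    simp only [Fin.ext_iff]
    omega

theorem zeroBlock_nonempty (s : Fin (2*k+1)) (i : Fin (k+1)) : (zeroBlock k s i).Nonempty := by
  unfold zeroBlock
  split_ifs <;> simp

theorem zeroBlock_disjoint {p q : Fin (2*k+1) × Fin (k+1)} (hpq : p ≠ q) :
    Disjoint (zeroBlock k p.1 p.2) (zeroBlock k q.1 q.2) := by
  refine Finset.disjoint_left.mpr fun a hp hq => hpq ?_
  obtain ⟨s, j, rfl⟩ := secIdx_surjective a
  rw [secIdx_mem_zeroBlock] at hp hq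
  exact Prod.ext (hp.1.symm.trans hq.1) (Fin.ext (hp.2.symm.trans hq.2))

theorem not_goodSection_false : ¬ goodSection k (fun _ => false) := by
  rintro (⟨i, hi, hx⟩ | hx)
  · simpa using hx ⟨2*i, by omega⟩
  · simpa using hx ⟨2*k, by omega⟩

theorem goodSection_pair (i : Fin (k+1)) :
    goodSection k (fun p => decide (p.val / 2 = i.val)) := by
  by_cases hi : i.val < k
  · exact Or.inl ⟨i.val, hi, fun j => by simp only [decide_eq_decide]; omega⟩
  · exact Or.inr fun j => by simp only [decide_eq_decide]; omega

theorem goodF_false : goodF k (fun _ => false) = false := by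
  simp only [goodF, decide_eq_false_iff_not, not_exists]
  exact fun _ => not_goodSection_false

theorem goodF_flipS_zeroBlock (s : Fin (2*k+1)) (i : Fin (k+1)) :
    goodF k (flipS (fun _ => false) (zeroBlock k s i)) = true := by
  simp only [goodF, decide_eq_true_eq]
  refine ⟨s, ?_⟩
  convert goodSection_pair i using 2 with p
  simp [sectionOf, flipS_false_apply, secIdx_mem_zeroBlock]

end GoodSections

theorem stmt14 (k : ℕ) :
    (∀ p q : Fin (2*k+1) × Fin (k+1), p ≠ q →
      Disjoint (zeroBlock k p.1 p.2) (zeroBlock k q.1 q.2)) ∧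
    (∀ p : Fin (2*k+1) × Fin (k+1),
      goodF k (flipS (fun _ => false) (zeroBlock k p.1 p.2)) ≠ goodF k (fun _ => false)) ∧
    (2*k+1)*(k+1) ≤ bsAt (goodF k) (fun _ => false) := by
  have hflip (p : Fin (2*k+1) × Fin (k+1)) :
      goodF k (flipS (fun _ => false) (zeroBlock k p.1 p.2)) ≠ goodF k (fun _ => false) := by
    rw [goodF_flipS_zeroBlock, goodF_false]
    exact Bool.true_eq_false.mp
  refine ⟨fun p q => zeroBlock_disjoint, hflip, ?_⟩
  have hcard := card_le_bsAt (goodF k) (fun _ => false)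
    (fun p : Fin (2*k+1) × Fin (k+1) => zeroBlock k p.1 p.2) (fun p => zeroBlock_nonempty p.1 p.2) (fun p q => zeroBlock_disjoint) hflip
  rwa [Fintype.card_prod, Fintype.card_fin, Fintype.card_fin] at hcard
end
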